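/- Suppose at x = X: P_x(X) = 0, u_x(X) < 0, u_xx < 0 on a left neighborhood of X, and (Γ_x - b_x)_x < 0 on a left neighborhood of X, with Γ - b > 0. Then there exists ε₀ > 0 such that P_x(X - ε) > 0 for all 0 < ε < ε₀. -/

import Mathlib

/-!
Left of the crest both terms of `P_x = u_x + (Γ_x - b_x)/√(Γ - b)` strictly exceed their values
at `X`: `u_x` and `Γ_x - b_x` decrease, so they are larger at `X - ε`. Moreover
`Γ_x - b_x > 0` at `X` (because `u_x(X) < 0` while `P_x(X) = 0`), hence on all of `(X - η, X]`,
so `Γ - b` increases there and the denominator `√(Γ - b)` is smaller at `X - ε`.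
Thus `P_x(X - ε) > P_x(X) = 0`.
-/

open Set

theorem strictAntiOn_Ioc_of_deriv_neg {f : ℝ → ℝ} {a b : ℝ} (hf : ContinuousOn f (Ioc a b))
    (hf' : ∀ x ∈ Ioo a b, deriv f x < 0) : StrictAntiOn f (Ioc a b) :=
  strictAntiOn_of_deriv_neg (convex_Ioc a b) hf (by rwa [interior_Ioc])

theorem strictMonoOn_Ioc_of_deriv_pos {f : ℝ → ℝ} {a b : ℝ} (hf : ContinuousOn f (Ioc a b))
    (hf' : ∀ x ∈ Ioo a b, 0 < deriv f x) : StrictMonoOn f (Ioc a b) :=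
  strictMonoOn_of_deriv_pos (convex_Ioc a b) hf (by rwa [interior_Ioc])

theorem div_sqrt_lt_div_sqrt {a b c d : ℝ} (ha : 0 < a) (hab : a < b) (hc : 0 < c)
    (hcd : c < d) : a / Real.sqrt d < b / Real.sqrt c := by
  have hsc : 0 < Real.sqrt c := Real.sqrt_pos.2 hc
  calc a / Real.sqrt d < a / Real.sqrt c :=
        div_lt_div_of_pos_left ha hsc (Real.sqrt_lt_sqrt hc.le hcd)
    _ < b / Real.sqrt c := div_lt_div_of_pos_right hab hsc

theorem deriv_sub_of_contDiffOn {f g : ℝ → ℝ} {s : Set ℝ} {n : WithTop ℕ∞} (hn : n ≠ 0)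
    (hs : IsOpen s) (hf : ContDiffOn ℝ n f s) (hg : ContDiffOn ℝ n g s) {x : ℝ} (hx : x ∈ s) :
    deriv (fun y => f y - g y) x = deriv f x - deriv g x :=
  deriv_sub ((hf.contDiffAt (hs.mem_nhds hx)).differentiableAt hn)
    ((hg.contDiffAt (hs.mem_nhds hx)).differentiableAt hn)

/-- crest side: if `P_x(X) = 0`, `u_x(X) < 0`, and both `u_xx < 0`
and `(Γ_x - b_x)_x < 0` on a left neighborhood of `X`, then `P_x(X-ε) > 0` for
all small `ε > 0`. -/
theorem crest_side_positive
    (u Γ b Px : ℝ → ℝ) (X : ℝ) (s : Set ℝ)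
    (hs : IsOpen s) (hX : X ∈ s)
    (hu : ContDiffOn ℝ 2 u s) (hΓ : ContDiffOn ℝ 2 Γ s) (hb : ContDiffOn ℝ 2 b s)
    (hpos : ∀ x ∈ s, Γ x - b x > 0)
    (hPx : ∀ x ∈ s, Px x =
      deriv u x + (deriv Γ x - deriv b x) / Real.sqrt (Γ x - b x))
    (h0 : Px X = 0)
    (hux : deriv u X < 0)
    (η : ℝ) (hη : 0 < η) (hηs : Ioo (X - η) X ⊆ s)
    (huxx : ∀ x ∈ Ioo (X - η) X, deriv (deriv u) x < 0)
    (hslope : ∀ x ∈ Ioo (X - η) X, deriv (fun y => deriv Γ y - deriv b y) x < 0) :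
    ∃ ε₀ > 0, ∀ ε : ℝ, 0 < ε → ε < ε₀ → Px (X - ε) > 0 := by
  have hIoc : Ioc (X - η) X ⊆ s := fun y hy =>
    hy.2.eq_or_lt.elim (fun h => h ▸ hX) fun h => hηs ⟨hy.1, h⟩
  have hXmem : X ∈ Ioc (X - η) X := ⟨by linarith, le_rfl⟩
  have hu_anti : StrictAntiOn (deriv u) (Ioc (X - η) X) := strictAntiOn_Ioc_of_deriv_neg
    ((hu.continuousOn_deriv_of_isOpen hs one_le_two).mono hIoc) huxx
  have hslope_anti : StrictAntiOn (fun y => deriv Γ y - deriv b y) (Ioc (X - η) X) :=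
    strictAntiOn_Ioc_of_deriv_neg (((hΓ.continuousOn_deriv_of_isOpen hs one_le_two).sub
      (hb.continuousOn_deriv_of_isOpen hs one_le_two)).mono hIoc) hslope
  have hslope_X : 0 < deriv Γ X - deriv b X := by
    have hquot : 0 < (deriv Γ X - deriv b X) / Real.sqrt (Γ X - b X) := by
      linarith [hPx X hX]
    exact (div_pos_iff_of_pos_right (Real.sqrt_pos.2 (hpos X hX))).1 hquot
  have hgap_mono : StrictMonoOn (fun y => Γ y - b y) (Ioc (X - η) X) := by
    refine strictMonoOn_Ioc_of_deriv_pos ((hΓ.continuousOn.sub hb.continuousOn).mono hIoc)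
      fun y hy => ?_
    rw [deriv_sub_of_contDiffOn two_ne_zero hs hΓ hb (hηs hy)]
    exact hslope_X.trans (hslope_anti (Ioo_subset_Ioc_self hy) hXmem hy.2)
  refine ⟨η, hη, fun ε hε hεη => ?_⟩
  have hx : X - ε ∈ Ioc (X - η) X := ⟨by linarith, by linarith⟩
  have hxX : X - ε < X := by linarith
  have hquot := div_sqrt_lt_div_sqrt hslope_X (hslope_anti hx hXmem hxX)
    (hpos _ (hIoc hx)) (hgap_mono hx hXmem hxX)
  rw [hPx _ (hIoc hx)]
  linarith [hPx X hX, hu_anti hx hXmem hxX]
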